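/- arXiv:2307.12738 — 3 statements merged into one kernel-verified Lean document; each statement's English description precedes it below -/
import Mathlib

section
/- Let Ω ⊆ ℝⁿ be a bounded open convex set and U ∈ C²(Ω) ∩ C(closure Ω) satisfy ΔU = -2 in Ω and U = 0 on ∂Ω. Then for every X ∈ Ω, |∇U(X)| ≤ diam(Ω). -/
/-!
The maximum principle compares `U` with the torsion function of a slab: at a boundary point `z`,
the convex set `Ω` lies in a slab of width `diam Ω` bounded by a supporting hyperplane through `z`,
whence `U (z + h) ≤ diam Ω * ‖h‖`. On the boundary of `Ω ∩ (Ω - h)` either `x` or `x + h` lies on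
`∂Ω`, so this and `U ≥ 0` give `U (x + h) - U x ≤ diam Ω * ‖h‖` there. That difference is
harmonic, so the bound holds throughout, and `U` is `diam Ω`-Lipschitz on `Ω`.
-/

open scoped InnerProductSpace

/-- The Euclidean Laplacian, as the sum of second derivatives in coordinate directions. -/
noncomputable def lap {n : ℕ} (f : EuclideanSpace ℝ (Fin n) → ℝ)
    (x : EuclideanSpace ℝ (Fin n)) : ℝ :=
  ∑ i : Fin n, fderiv ℝ (fun y => fderiv ℝ f y (EuclideanSpace.single i 1)) x
    (EuclideanSpace.single i 1)

open Filter Topology Laplacian InnerProductSpace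

theorem IsLocalMax.deriv_deriv_nonpos {f : ℝ → ℝ} {t : ℝ} (h : IsLocalMax f t)
    (hc : ContinuousAt f t) : deriv (deriv f) t ≤ 0 := by
  by_contra! hpos
  have hmin := isLocalMin_of_deriv_deriv_pos hpos h.deriv_eq_zero hc
  have hconst : f =ᶠ[𝓝 t] fun _ => f t := (h.and hmin).mono fun s hs => le_antisymm hs.1 hs.2
  have hzero : deriv (deriv f) t = 0 := by
    rw [hconst.deriv.deriv_eq]
    simp
  exact hpos.ne' hzero

section SecondDerivative

variable {E F : Type*} [NormedAddCommGroup E] [NormedSpace ℝ E]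
  [NormedAddCommGroup F] [NormedSpace ℝ F]

theorem ContDiffAt.fderiv_fderiv_apply {f : E → F} {x : E} (hf : ContDiffAt ℝ 2 f x) (u v : E) :
    fderiv ℝ (fun y => fderiv ℝ f y v) x u = fderiv ℝ (fderiv ℝ f) x u v := by
  have hd : DifferentiableAt ℝ (fderiv ℝ f) x :=
    (hf.fderiv_right (m := 1) (by norm_num)).differentiableAt (by norm_num)
  rw [fderiv_clm_apply hd (differentiableAt_const v)]
  simp

theorem IsLocalMax.fderiv_fderiv_apply_nonpos {f : E → ℝ} {x : E} (h : IsLocalMax f x)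
    (hf : ContDiffAt ℝ 2 f x) (v : E) : fderiv ℝ (fun y => fderiv ℝ f y v) x v ≤ 0 := by
  set γ : ℝ → E := fun s => x + s • v
  have hγ : ∀ s, HasDerivAt γ v s := fun s => by
    simpa [γ] using ((hasDerivAt_id s).smul_const v).const_add x
  have hγ0 : γ 0 = x := by simp [γ]
  have hγx : Tendsto γ (𝓝 0) (𝓝 x) := hγ0 ▸ (hγ 0).continuousAt.tendsto
  have hderiv : deriv (f ∘ γ) =ᶠ[𝓝 0] fun s => fderiv ℝ f (γ s) v := by
    filter_upwards [hγx.eventually (hf.eventually (by simp))] with s hs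
    exact ((hs.differentiableAt (by simp)).hasFDerivAt.comp_hasDerivAt s (hγ s)).deriv
  have hd : DifferentiableAt ℝ (fun y => fderiv ℝ f y v) (γ 0) := by
    rw [hγ0]
    exact ((hf.fderiv_right (m := 1) (by norm_num)).differentiableAt (by norm_num)).clm_apply
      (differentiableAt_const v)
  have hdd : deriv (fun s => fderiv ℝ f (γ s) v) 0 = fderiv ℝ (fun y => fderiv ℝ f y v) x v := by
    rw [← hγ0]
    exact (hd.hasFDerivAt.comp_hasDerivAt 0 (hγ 0)).deriv
  rw [← hdd, ← hderiv.deriv_eq]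
  exact IsLocalMax.deriv_deriv_nonpos ((hγ0 ▸ h).comp_continuous (hγ 0).continuousAt)
    (hf.continuousAt.comp_of_eq (hγ 0).continuousAt hγ0)

end SecondDerivative

theorem contDiff_inner_sub_mul_inner_sub {E : Type*} [NormedAddCommGroup E]
    [InnerProductSpace ℝ E] {n : WithTop ℕ∞} (a : E) (c c' : ℝ) :
    ContDiff ℝ n fun y => (⟪a, y⟫_ℝ - c) * (⟪a, y⟫_ℝ - c') := by
  have hi : ContDiff ℝ n fun y : E => ⟪a, y⟫_ℝ := contDiff_const.inner ℝ contDiff_id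
  exact (hi.sub contDiff_const).mul (hi.sub contDiff_const)

section Laplacian

variable {E F : Type*} [NormedAddCommGroup E] [InnerProductSpace ℝ E] [FiniteDimensional ℝ E]
  [NormedAddCommGroup F] [NormedSpace ℝ F]

theorem laplacian_eq_sum_fderiv_fderiv {ι : Type*} [Fintype ι] (b : OrthonormalBasis ι ℝ E)
    {f : E → F} {x : E} (hf : ContDiffAt ℝ 2 f x) :
    Δ f x = ∑ i, fderiv ℝ (fun y => fderiv ℝ f y (b i)) x (b i) := by
  simp [laplacian_eq_iteratedFDeriv_orthonormalBasis f b, iteratedFDeriv_two_apply,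
    hf.fderiv_fderiv_apply]

theorem laplacian_comp_add_right (f : E → F) (h x : E) :
    Δ (fun y => f (y + h)) x = Δ f (x + h) := by
  simp [laplacian_eq_iteratedFDeriv_stdOrthonormalBasis, iteratedFDeriv_comp_add_right]

theorem laplacian_inner_sub_mul_inner_sub (a : E) (c c' : ℝ) (x : E) :
    Δ (fun y => (⟪a, y⟫_ℝ - c) * (⟪a, y⟫_ℝ - c')) x = 2 * ‖a‖ ^ 2 := by
  have hl : ∀ y, HasFDerivAt (fun y => ⟪a, y⟫_ℝ) (innerSL ℝ a) y :=
    fun y => (innerSL ℝ a).hasFDerivAt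
  have hD : ∀ v, (fun y => fderiv ℝ (fun y => (⟪a, y⟫_ℝ - c) * (⟪a, y⟫_ℝ - c')) y v) =
      fun y => (2 * ⟪a, y⟫_ℝ - c - c') * ⟪a, v⟫_ℝ := fun v => by
    ext y
    rw [((hl y).sub_const c).fun_mul ((hl y).sub_const c') |>.fderiv]
    simp only [add_apply, smul_apply, coe_innerSL_apply, smul_eq_mul]
    ring
  have hDD : ∀ v, fderiv ℝ (fun y => (2 * ⟪a, y⟫_ℝ - c - c') * ⟪a, v⟫_ℝ) x v =
      2 * ⟪a, v⟫_ℝ ^ 2 := fun v => by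
    rw [((((hl x).const_mul 2).sub_const c).sub_const c').mul_const ⟪a, v⟫_ℝ |>.fderiv]
    simp only [smul_apply, coe_innerSL_apply, smul_eq_mul]
    ring
  let b := stdOrthonormalBasis ℝ E
  rw [laplacian_eq_sum_fderiv_fderiv b (contDiff_inner_sub_mul_inner_sub a c c').contDiffAt]
  simp only [hD, hDD, ← Finset.mul_sum]
  rw [← real_inner_self_eq_norm_sq, ← b.sum_inner_mul_inner a a]
  simp [sq, real_inner_comm]

theorem IsLocalMax.laplacian_nonpos {f : E → ℝ} {x : E} (h : IsLocalMax f x)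
    (hf : ContDiffAt ℝ 2 f x) : Δ f x ≤ 0 := by
  rw [laplacian_eq_sum_fderiv_fderiv (stdOrthonormalBasis ℝ E) hf]
  exact Finset.sum_nonpos fun i _ => h.fderiv_fderiv_apply_nonpos hf _

end Laplacian

section MaximumPrinciple

variable {E : Type*} [NormedAddCommGroup E] [InnerProductSpace ℝ E] [FiniteDimensional ℝ E]

theorem exists_mem_frontier_le_of_laplacian_pos {s : Set E} (hb : Bornology.IsBounded s)
    (ho : IsOpen s) {v : E → ℝ} (hc : ContinuousOn v (closure s)) (hv : ContDiffOn ℝ 2 v s)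
    (hpos : ∀ x ∈ s, 0 < Δ v x) {x : E} (hx : x ∈ closure s) :
    ∃ z ∈ frontier s, v x ≤ v z := by
  obtain ⟨z, hz, hmax⟩ := hb.isCompact_closure.exists_isMaxOn ⟨x, hx⟩ hc
  refine ⟨z, ?_, hmax hx⟩
  rw [ho.frontier_eq]
  refine ⟨hz, fun hzs => ?_⟩
  have hloc : IsLocalMax v z := hmax.isLocalMax (mem_of_superset (ho.mem_nhds hzs) subset_closure)
  exact (hpos z hzs).not_ge (hloc.laplacian_nonpos (hv.contDiffAt (ho.mem_nhds hzs)))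

theorem nonpos_of_laplacian_nonneg [Nontrivial E] {s : Set E} (hb : Bornology.IsBounded s)
    (ho : IsOpen s) {v : E → ℝ} (hc : ContinuousOn v (closure s)) (hv : ContDiffOn ℝ 2 v s)
    (hΔ : ∀ x ∈ s, 0 ≤ Δ v x) (hfr : ∀ x ∈ frontier s, v x ≤ 0) :
    ∀ x ∈ closure s, v x ≤ 0 := by
  intro x hx
  obtain ⟨R, hR⟩ := hb.subset_closedBall 0
  obtain ⟨a, ha⟩ := exists_norm_eq E zero_le_one
  -- `v + ε • q` is strictly subharmonic, and `q ≤ 0` on `closure s ⊆ closedBall 0 R`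
  set q : E → ℝ := fun y => (⟪a, y⟫_ℝ - R) * (⟪a, y⟫_ℝ - -R)
  have hq : ContDiff ℝ 2 q := contDiff_inner_sub_mul_inner_sub a _ _
  have hqR : ∀ y, -R ^ 2 ≤ q y := fun y => by nlinarith [sq_nonneg ⟪a, y⟫_ℝ]
  have hq0 : ∀ y ∈ closure s, q y ≤ 0 := by
    intro y hy
    have hy : ‖y‖ ≤ R := by simpa using closure_minimal hR Metric.isClosed_closedBall hy
    have hay := abs_real_inner_le_norm a y
    rw [ha, one_mul] at hay
    have := abs_le.mp (hay.trans hy)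
    nlinarith
  have hε : ∀ ε > 0, v x ≤ ε * R ^ 2 := by
    intro ε hε
    have hpos : ∀ y ∈ s, 0 < Δ (v + ε • q) y := by
      intro y hy
      have hεq : ContDiffAt ℝ 2 (ε • q) y := hq.contDiffAt.const_smul ε
      rw [(hv.contDiffAt (ho.mem_nhds hy)).laplacian_add hεq,
        laplacian_smul ε hq.contDiffAt, laplacian_inner_sub_mul_inner_sub, ha, smul_eq_mul]
      linarith [hΔ y hy]
    obtain ⟨z, hz, hxz⟩ := exists_mem_frontier_le_of_laplacian_pos hb ho
      (hc.add (hq.continuous.continuousOn.const_smul ε)) (hv.add (hq.contDiffOn.const_smul ε))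
      hpos hx
    simp only [Pi.add_apply, Pi.smul_apply, smul_eq_mul] at hxz
    nlinarith [hq0 z (frontier_subset_closure hz), hfr z hz, hqR x]
  have hlim : Tendsto (fun ε : ℝ => ε * R ^ 2) (𝓝[>] 0) (𝓝 0) :=
    tendsto_nhdsWithin_of_tendsto_nhds
      ((continuous_id.mul continuous_const).tendsto' 0 0 (by simp))
  exact ge_of_tendsto hlim (eventually_nhdsWithin_of_forall hε)

theorem le_of_laplacian_le_of_le_on_frontier [Nontrivial E] {s : Set E}
    (hb : Bornology.IsBounded s) (ho : IsOpen s) {u v : E → ℝ}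
    (hu : ContinuousOn u (closure s)) (hv : ContinuousOn v (closure s))
    (hu₂ : ContDiffOn ℝ 2 u s) (hv₂ : ContDiffOn ℝ 2 v s)
    (hΔ : ∀ x ∈ s, Δ v x ≤ Δ u x) (hfr : ∀ x ∈ frontier s, u x ≤ v x) :
    ∀ x ∈ closure s, u x ≤ v x := by
  intro x hx
  refine sub_nonpos.mp (nonpos_of_laplacian_nonneg hb ho (hu.sub hv) (hu₂.sub hv₂)
    (fun y hy => ?_) (fun y hy => sub_nonpos.mpr (hfr y hy)) x hx)
  rw [(hu₂.contDiffAt (ho.mem_nhds hy)).laplacian_sub (hv₂.contDiffAt (ho.mem_nhds hy))]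
  linarith [hΔ y hy]

end MaximumPrinciple

section Convex

variable {E : Type*} [NormedAddCommGroup E] [InnerProductSpace ℝ E] [CompleteSpace E]

theorem Convex.exists_norm_eq_one_inner_le_of_mem_frontier {Ω : Set E} (hconv : Convex ℝ Ω)
    (ho : IsOpen Ω) {z : E} (hz : z ∈ frontier Ω) :
    ∃ a : E, ‖a‖ = 1 ∧ ∀ y ∈ closure Ω, ⟪a, y⟫_ℝ ≤ ⟪a, z⟫_ℝ := by
  have hzΩ : z ∉ Ω := (ho.frontier_eq ▸ hz).2
  obtain ⟨y₀, hy₀⟩ := closure_nonempty_iff.mp ⟨z, frontier_subset_closure hz⟩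
  obtain ⟨f, hf⟩ := geometric_hahn_banach_open_point hconv ho hzΩ
  set a := (toDual ℝ E).symm f
  have hfa : ∀ y, f y = ⟪a, y⟫_ℝ := fun y => by simp [a]
  have ha : a ≠ 0 := fun h => by simpa [hfa, h] using hf y₀ hy₀
  have hle : closure Ω ⊆ {y | ⟪a, y⟫_ℝ ≤ ⟪a, z⟫_ℝ} :=
    closure_minimal (fun y hy => by simpa [hfa] using (hf y hy).le)
      (isClosed_le (continuous_const.inner continuous_id) continuous_const)
  refine ⟨‖a‖⁻¹ • a, norm_smul_inv_norm ha, fun y hy => ?_⟩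
  simp only [real_inner_smul_left]
  exact mul_le_mul_of_nonneg_left (hle hy) (by positivity)

end Convex

section Torsion

variable {E : Type*} [NormedAddCommGroup E] [InnerProductSpace ℝ E] [FiniteDimensional ℝ E]

structure IsTorsionFunction (Ω : Set E) (U : E → ℝ) : Prop where
  continuousOn : ContinuousOn U (closure Ω)
  contDiffOn : ContDiffOn ℝ 2 U Ω
  laplacian_eq : ∀ x ∈ Ω, Δ U x = -2
  eq_zero_of_mem_frontier : ∀ x ∈ frontier Ω, U x = 0

namespace IsTorsionFunction

variable [Nontrivial E] {Ω : Set E} {U : E → ℝ}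

theorem nonneg (hU : IsTorsionFunction Ω U) (hb : Bornology.IsBounded Ω) (ho : IsOpen Ω) :
    ∀ x ∈ closure Ω, 0 ≤ U x :=
  le_of_laplacian_le_of_le_on_frontier hb ho continuousOn_const hU.continuousOn
    contDiffOn_const hU.contDiffOn (fun x hx => by simp [hU.laplacian_eq x hx])
    (fun x hx => (hU.eq_zero_of_mem_frontier x hx).ge)

theorem le_mul_of_forall_inner_mem_Icc (hU : IsTorsionFunction Ω U) (hb : Bornology.IsBounded Ω)
    (ho : IsOpen Ω) {a : E} (ha : ‖a‖ = 1) {c c' : ℝ}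
    (hslab : ∀ y ∈ closure Ω, ⟪a, y⟫_ℝ ∈ Set.Icc c c') :
    ∀ y ∈ closure Ω, U y ≤ (⟪a, y⟫_ℝ - c) * (c' - ⟪a, y⟫_ℝ) := by
  set q : E → ℝ := fun y => (⟪a, y⟫_ℝ - c) * (⟪a, y⟫_ℝ - c')
  have hq : ContDiff ℝ 2 q := contDiff_inner_sub_mul_inner_sub a _ _
  have key := le_of_laplacian_le_of_le_on_frontier hb ho hU.continuousOn
    hq.continuous.neg.continuousOn hU.contDiffOn hq.neg.contDiffOn
    (fun x hx => by
      rw [hU.laplacian_eq x hx, laplacian_neg, Pi.neg_apply, laplacian_inner_sub_mul_inner_sub, ha]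
      norm_num)
    (fun x hx => by
      obtain ⟨h₁, h₂⟩ := hslab x (frontier_subset_closure hx)
      rw [hU.eq_zero_of_mem_frontier x hx]
      simp only [Pi.neg_apply, q]
      nlinarith)
  intro y hy
  have := key y hy
  simp only [Pi.neg_apply, q] at this
  linarith

theorem le_diam_mul_norm_of_mem_frontier (hU : IsTorsionFunction Ω U)
    (hb : Bornology.IsBounded Ω) (ho : IsOpen Ω) (hconv : Convex ℝ Ω) {z h : E}
    (hz : z ∈ frontier Ω) (hzh : z + h ∈ closure Ω) : U (z + h) ≤ Metric.diam Ω * ‖h‖ := by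
  set d := Metric.diam Ω
  obtain ⟨a, ha, hsupp⟩ := hconv.exists_norm_eq_one_inner_le_of_mem_frontier ho hz
  have hslab : ∀ y ∈ closure Ω, ⟪a, y⟫_ℝ ∈ Set.Icc (⟪a, z⟫_ℝ - d) ⟪a, z⟫_ℝ := by
    intro y hy
    refine ⟨?_, hsupp y hy⟩
    have hzy : ⟪a, z - y⟫_ℝ ≤ d := calc
      ⟪a, z - y⟫_ℝ ≤ ‖a‖ * ‖z - y‖ := real_inner_le_norm a _
      _ = dist z y := by rw [ha, one_mul, dist_eq_norm]
      _ ≤ d := (Metric.dist_le_diam_of_mem hb.closure (frontier_subset_closure hz) hy).trans_eq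
        (Metric.diam_closure Ω)
    rw [inner_sub_right] at hzy
    linarith
  have hbar := hU.le_mul_of_forall_inner_mem_Icc hb ho ha hslab (z + h) hzh
  have hah : 0 ≤ -⟪a, h⟫_ℝ := by
    have := hsupp (z + h) hzh
    rw [inner_add_right] at this
    linarith
  have hah' : -⟪a, h⟫_ℝ ≤ ‖h‖ := by
    have := real_inner_le_norm a (-h)
    rwa [inner_neg_right, ha, one_mul, norm_neg] at this
  have hd : 0 ≤ d := Metric.diam_nonneg
  rw [inner_add_right] at hbar
  nlinarith

theorem sub_le_diam_mul_norm (hU : IsTorsionFunction Ω U) (hb : Bornology.IsBounded Ω)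
    (ho : IsOpen Ω) (hconv : Convex ℝ Ω) {x h : E} (hx : x ∈ Ω) (hxh : x + h ∈ Ω) :
    U (x + h) - U x ≤ Metric.diam Ω * ‖h‖ := by
  set d := Metric.diam Ω
  set D := Ω ∩ (· + h) ⁻¹' Ω
  have hDo : IsOpen D := ho.inter (ho.preimage (continuous_add_const h))
  have hDΩ : closure D ⊆ closure Ω := closure_mono Set.inter_subset_left
  have hDΩh : Set.MapsTo (· + h) (closure D) (closure Ω) := fun y hy =>
    (continuous_add_const h).closure_preimage_subset Ω (closure_mono Set.inter_subset_right hy)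
  have hfr : ∀ y ∈ frontier D, U (y + h) ≤ U y + d * ‖h‖ := by
    intro y hy
    rw [hDo.frontier_eq] at hy
    obtain ⟨hyD, hyD'⟩ := hy
    have hdh : 0 ≤ d * ‖h‖ := mul_nonneg Metric.diam_nonneg (norm_nonneg h)
    by_cases hyΩ : y ∈ Ω
    · have hyh : y + h ∈ frontier Ω := ho.frontier_eq ▸ ⟨hDΩh hyD, fun h' => hyD' ⟨hyΩ, h'⟩⟩
      rw [hU.eq_zero_of_mem_frontier _ hyh]
      linarith [hU.nonneg hb ho y (hDΩ hyD)]
    · have hy : y ∈ frontier Ω := ho.frontier_eq ▸ ⟨hDΩ hyD, hyΩ⟩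
      rw [hU.eq_zero_of_mem_frontier _ hy, zero_add]
      exact hU.le_diam_mul_norm_of_mem_frontier hb ho hconv hy (hDΩh hyD)
  have key := le_of_laplacian_le_of_le_on_frontier (u := fun y => U (y + h))
    (v := U + fun _ => d * ‖h‖) (hb.subset Set.inter_subset_left) hDo
    (hU.continuousOn.comp (continuous_add_const h).continuousOn hDΩh)
    ((hU.continuousOn.mono hDΩ).add continuousOn_const)
    (hU.contDiffOn.comp (contDiff_id.add contDiff_const).contDiffOn fun y hy => hy.2)
    ((hU.contDiffOn.mono Set.inter_subset_left).add contDiffOn_const)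
    (fun y hy => by
      rw [(hU.contDiffOn.contDiffAt (ho.mem_nhds hy.1)).laplacian_add contDiffAt_const,
        laplacian_comp_add_right, laplacian_const, hU.laplacian_eq _ hy.1,
        hU.laplacian_eq _ hy.2]
      simp)
    hfr
  have := key x (subset_closure ⟨hx, hxh⟩)
  simp only [Pi.add_apply] at this
  linarith

theorem norm_gradient_le_diam (hU : IsTorsionFunction Ω U) (hb : Bornology.IsBounded Ω)
    (ho : IsOpen Ω) (hconv : Convex ℝ Ω) {x : E} (hx : x ∈ Ω) :
    ‖gradient U x‖ ≤ Metric.diam Ω := by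
  rw [gradient, LinearIsometryEquiv.norm_map]
  refine norm_fderiv_le_of_lip' ℝ Metric.diam_nonneg ?_
  filter_upwards [ho.mem_nhds hx] with y hy
  have hxy := hU.sub_le_diam_mul_norm hb ho hconv hx (h := y - x) (by simpa using hy)
  have hyx := hU.sub_le_diam_mul_norm hb ho hconv hy (h := x - y) (by simpa using hx)
  rw [add_sub_cancel] at hxy hyx
  rw [norm_sub_rev] at hyx
  exact abs_sub_le_iff.mpr ⟨hxy, hyx⟩

end IsTorsionFunction

end Torsion

theorem lap_eq_laplacian {n : ℕ} {f : EuclideanSpace ℝ (Fin n) → ℝ}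
    {x : EuclideanSpace ℝ (Fin n)} (hf : ContDiffAt ℝ 2 f x) : lap f x = Δ f x := by
  simp [lap, laplacian_eq_sum_fderiv_fderiv (EuclideanSpace.basisFun (Fin n) ℝ) hf]

theorem stmt_1_general (n : ℕ) (Ω : Set (EuclideanSpace ℝ (Fin n)))
    (hb : Bornology.IsBounded Ω) (ho : IsOpen Ω) (hconv : Convex ℝ Ω)
    (U : EuclideanSpace ℝ (Fin n) → ℝ)
    (hUc : ContinuousOn U (closure Ω)) (hU2 : ContDiffOn ℝ 2 U Ω)
    (hlap : ∀ x ∈ Ω, lap U x = -2)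
    (hbd : ∀ x ∈ frontier Ω, U x = 0)
    (X : EuclideanSpace ℝ (Fin n)) (hX : X ∈ Ω) :
    ‖gradient U X‖ ≤ Metric.diam Ω := by
  -- `lap U X` is an empty sum when `n = 0`; `NeZero n` makes the space nontrivial
  have : NeZero n := ⟨by rintro rfl; simpa [lap] using hlap X hX⟩
  have hΔ : ∀ x ∈ Ω, Δ U x = -2 := fun x hx =>
    lap_eq_laplacian (hU2.contDiffAt (ho.mem_nhds hx)) ▸ hlap x hx
  exact IsTorsionFunction.norm_gradient_le_diam ⟨hUc, hU2, hΔ, hbd⟩ hb ho hconv hX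

/-- Gradient bound for the torsion function: if `Ω ⊆ ℝⁿ` is a bounded open convex set and
`U ∈ C²(Ω) ∩ C(closure Ω)` satisfies `ΔU = -2` in `Ω` and `U = 0` on `∂Ω`, then
`|∇U(X)| ≤ diam Ω` for every `X ∈ Ω`. -/
theorem stmt_1 (n : ℕ) (Ω : Set (EuclideanSpace ℝ (Fin n)))
    (hb : Bornology.IsBounded Ω) (ho : IsOpen Ω) (hconv : Convex ℝ Ω)
    (hne : Ω.Nonempty)
    (U : EuclideanSpace ℝ (Fin n) → ℝ)
    (hUc : ContinuousOn U (closure Ω)) (hU2 : ContDiffOn ℝ 2 U Ω)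
    (hlap : ∀ x ∈ Ω, lap U x = -2)
    (hbd : ∀ x ∈ frontier Ω, U x = 0)
    (X : EuclideanSpace ℝ (Fin n)) (hX : X ∈ Ω) :
    ‖gradient U X‖ ≤ Metric.diam Ω :=
  stmt_1_general n Ω hb ho hconv U hUc hU2 hlap hbd X hX
end

section
/- With the same hypotheses (Ω of class C²₊, U the torsion function with ΔU = -2, F the inverse Gauss map, κ the Gauss curvature, c_{ij} the cofactor matrix of (h_{ij} + h δ_{ij})), the normal-normal component of the Hessian satisfies (∇²U(F(ξ)) ξ)·ξ = κ·|∇U(F(ξ))|·Σ_i c_{ii}(ξ) - 2 for every ξ ∈ S^(n-1). -/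
open scoped InnerProductSpace

/-!
Put `G = ∇h`; for `x ≠ 0`, `G x` is the point of `Ω` with outer normal `x`, so `G` is
`0`-homogeneous, `DG(x)` is symmetric (it is `∇²h(x)`) with `DG(x) x = 0`, and `U ∘ G = 0`.
Differentiating `U ∘ G = 0` shows that `∇U(G x)` lies in the kernel of `DG(x)`. On `ξ^⊥` the
map `DG(ξ)` has matrix `W`, so `DG(x) + x ⊗ x` is invertible for `x` near `ξ`; there the kernel
of `DG(x)` is `ℝ x`, hence `∇U(G x) = c(x) x`. Differentiating this at `ξ` in the tangent
directions gives `W · (∇²U(F ξ)(e_i, e_j)) = c(ξ) · 1`, i.e. the tangential Hessian of `U` is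
`c(ξ) adj W / det W`. Since an interior minimum of `U` would have `ΔU ≥ 0`, `U ≥ 0` on `Ω`, and
as `U(F ξ) = 0`, `c(ξ) = -|∇U(F ξ)|`. Finally `ΔU = -2` extends to `F ξ` by continuity, and
`ΔU(F ξ)` is the sum of the normal and the tangential second derivatives.
-/

open Topology

section Gradient

variable {E : Type*} [NormedAddCommGroup E] [InnerProductSpace ℝ E] [CompleteSpace E]

theorem inner_gradient_apply (f : E → ℝ) (x v : E) : ⟪gradient f x, v⟫_ℝ = fderiv ℝ f x v :=
  InnerProductSpace.toDual_symm_apply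

theorem inner_fderiv_gradient_apply (f : E → ℝ) (x u v : E) :
    ⟪fderiv ℝ (gradient f) x u, v⟫_ℝ = fderiv ℝ (fderiv ℝ f) x u v := by
  have : gradient f = (InnerProductSpace.toDual ℝ E).symm ∘ fderiv ℝ f := rfl
  rw [this, LinearIsometryEquiv.comp_fderiv]
  exact InnerProductSpace.toDual_symm_apply

theorem DifferentiableAt.gradient {f : E → ℝ} {x : E}
    (hf : DifferentiableAt ℝ (fderiv ℝ f) x) : DifferentiableAt ℝ (gradient f) x :=
  (InnerProductSpace.toDual ℝ E).symm.differentiableAt.comp x hf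

theorem ContDiffOn.gradient {f : E → ℝ} {s : Set E} (hf : ContDiffOn ℝ 2 f s) (hs : IsOpen s) :
    ContDiffOn ℝ 1 (gradient f) s :=
  (InnerProductSpace.toDual ℝ E).symm.contDiff.comp_contDiffOn
    (hf.fderiv_of_isOpen hs (by norm_num))

theorem ContDiffAt.isSymmetric_fderiv_gradient {f : E → ℝ} {x : E} (hf : ContDiffAt ℝ 2 f x) :
    (fderiv ℝ (gradient f) x : E →ₗ[ℝ] E).IsSymmetric := fun u v => by
  rw [ContinuousLinearMap.coe_coe, inner_fderiv_gradient_apply, real_inner_comm,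
    inner_fderiv_gradient_apply]
  exact hf.isSymmSndFDerivAt (by simp) u v

theorem fderiv_apply_gradient_eq_zero {G : E → E} {u : E → ℝ} {x : E} {c : ℝ}
    (hG : DifferentiableAt ℝ G x) (hsymm : (fderiv ℝ G x : E →ₗ[ℝ] E).IsSymmetric)
    (hu : DifferentiableAt ℝ u (G x)) (hc : u ∘ G =ᶠ[𝓝 x] fun _ => c) :
    fderiv ℝ G x (gradient u (G x)) = 0 := by
  have horth : ∀ v, ⟪gradient u (G x), fderiv ℝ G x v⟫_ℝ = 0 := fun v => by
    have := congrArg (· v) (fderiv_comp x hu hG)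
    simp only [hc.fderiv_eq, fderiv_const_apply, zero_apply,
      ContinuousLinearMap.coe_comp, Function.comp_apply] at this
    rw [inner_gradient_apply, ← this]
  rw [← inner_self_eq_zero (𝕜 := ℝ), ← ContinuousLinearMap.coe_coe, hsymm,
    ContinuousLinearMap.coe_coe, horth]

theorem sum_fderiv_fderiv_eq_trace {ι : Type*} [Fintype ι] [FiniteDimensional ℝ E]
    (b : OrthonormalBasis ι ℝ E) (f : E → ℝ) (x : E) :
    ∑ i, fderiv ℝ (fderiv ℝ f) x (b i) (b i) =
      LinearMap.trace ℝ E (fderiv ℝ (gradient f) x : E →ₗ[ℝ] E) := by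
  rw [LinearMap.trace_eq_sum_inner _ b]
  refine Finset.sum_congr rfl fun i _ => ?_
  rw [ContinuousLinearMap.coe_coe, real_inner_comm, inner_fderiv_gradient_apply]

end Gradient

section Calculus

variable {E : Type*} [NormedAddCommGroup E] [NormedSpace ℝ E]

theorem IsLocalMin.fderiv_fderiv_apply_self_nonneg {f : E → ℝ} {x : E} (hmin : IsLocalMin f x)
    (hf : Differentiable ℝ f) (hf' : DifferentiableAt ℝ (fderiv ℝ f) x) (v : E) :
    0 ≤ fderiv ℝ (fderiv ℝ f) x v v := by
  set g : ℝ → ℝ := fun t => f (x + t • v)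
  have hline : ∀ t : ℝ, HasDerivAt (fun t : ℝ => x + t • v) v t := fun t => by
    simpa using ((hasDerivAt_id t).smul_const v).const_add x
  have hderiv : deriv g = fun t => fderiv ℝ f (x + t • v) v :=
    funext fun t => ((hf _).hasFDerivAt.comp_hasDerivAt t (hline t)).deriv
  have hderiv2 : deriv (deriv g) 0 = fderiv ℝ (fderiv ℝ f) x v v := by
    rw [hderiv]
    have := (hf'.hasFDerivAt.clm_apply (hasFDerivAt_const v x)).comp_hasDerivAt_of_eq (x := 0)
      (hline 0) (by simp)
    simpa [Function.comp_def] using this.deriv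
  have hgmin : IsLocalMin g 0 :=
    IsLocalMin.comp_continuous (by simpa using hmin) (hline 0).continuousAt
  by_contra hneg
  rw [not_le, ← hderiv2] at hneg
  -- `g` would be both a local minimum and a local maximum at `0`, hence locally constant
  have hgmax : IsLocalMax g 0 := isLocalMax_of_deriv_deriv_neg hneg hgmin.deriv_eq_zero
    ((hf _).continuousAt.comp (hline 0).continuousAt)
  have hconst : g =ᶠ[𝓝 0] fun _ => g 0 :=
    (hgmin.and hgmax).mono fun t ht => le_antisymm ht.2 ht.1
  have : deriv (deriv g) 0 = 0 := by
    rw [hconst.deriv.deriv_eq]; simp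
  linarith

theorem fderiv_apply_self_eq_zero_of_smul_eq {F : Type*} [NormedAddCommGroup F]
    [NormedSpace ℝ F] {f : E → F} {x : E}
    (hf : DifferentiableAt ℝ f x) (hhom : ∀ t : ℝ, 0 < t → f (t • x) = f x) :
    fderiv ℝ f x x = 0 := by
  have hline : HasDerivAt (fun t : ℝ => t • x) x 1 := by
    simpa using (hasDerivAt_id (1 : ℝ)).smul_const x
  have hchain : HasDerivAt (fun t : ℝ => f (t • x)) (fderiv ℝ f x x) 1 :=
    hf.hasFDerivAt.comp_hasDerivAt_of_eq (x := 1) hline (one_smul ℝ x).symm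
  have hconst : (fun t : ℝ => f (t • x)) =ᶠ[𝓝 1] fun _ => f x :=
    (lt_mem_nhds one_pos).mono fun t ht => hhom t ht
  exact hchain.unique ((hasDerivAt_const 1 (f x)).congr_of_eventuallyEq hconst)

theorem fderiv_apply_of_eventuallyEq_smul_self {p : E → E} {c : E → ℝ} {ξ : E}
    (hc : DifferentiableAt ℝ c ξ) (hp : p =ᶠ[𝓝 ξ] fun x => c x • x) (u : E) :
    fderiv ℝ p ξ u = c ξ • u + fderiv ℝ c ξ u • ξ := by
  have hd : HasFDerivAt (fun x => c x • x)
      (c ξ • ContinuousLinearMap.id ℝ E + (fderiv ℝ c ξ).smulRight ξ) ξ :=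
    hc.hasFDerivAt.fun_smul (hasFDerivAt_id ξ)
  rw [hp.fderiv_eq, hd.fderiv]
  simp

end Calculus

section Frame

variable {E ι : Type*} [NormedAddCommGroup E] [InnerProductSpace ℝ E] {ξ : E} {e : ι → E}

theorem ContinuousLinearMap.eq_div_smul_of_apply_eq_zero {A : E →L[ℝ] E} {x v : E} (hx : A x = 0)
    (hinj : Function.Injective (A + (innerSL ℝ x).smulRight x)) (hv : A v = 0) :
    v = (⟪x, v⟫_ℝ / ⟪x, x⟫_ℝ) • x := by
  rw [← sub_eq_zero]
  refine hinj.eq_iff' (map_zero _) |>.mp ?_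
  have horth : ⟪x, v - (⟪x, v⟫_ℝ / ⟪x, x⟫_ℝ) • x⟫_ℝ = 0 := by
    rw [inner_sub_right, real_inner_smul_right,
      div_mul_cancel_of_imp fun h0 => by simp [inner_self_eq_zero.mp h0], sub_self]
  rw [add_apply, smulRight_apply, innerSL_apply_apply, horth, zero_smul, add_zero, map_sub,
    map_smul, hv, hx, smul_zero, sub_zero]

theorem orthonormal_optionElim (hξ : ‖ξ‖ = 1) (he : Orthonormal ℝ e)
    (heξ : ∀ i, ⟪e i, ξ⟫_ℝ = 0) : Orthonormal ℝ (fun o : Option ι => o.elim ξ e) := by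
  classical
  rw [orthonormal_iff_ite]
  rintro (_ | i) (_ | j)
  · simp [hξ]
  · simpa [real_inner_comm] using heξ j
  · simp [heξ]
  · simp [orthonormal_iff_ite.mp he i j]

theorem exists_orthonormalBasis_optionElim [Fintype ι] [FiniteDimensional ℝ E] (hξ : ‖ξ‖ = 1)
    (he : Orthonormal ℝ e) (heξ : ∀ i, ⟪e i, ξ⟫_ℝ = 0)
    (hcard : Module.finrank ℝ E = Fintype.card ι + 1) :
    ∃ b : OrthonormalBasis (Option ι) ℝ E, ⇑b = fun o => o.elim ξ e := by
  have hon := orthonormal_optionElim hξ he heξ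
  have hcard' : Fintype.card (Option ι) = Module.finrank ℝ E := by simp [hcard]
  refine ⟨(basisOfOrthonormalOfCardEqFinrank hon hcard').toOrthonormalBasis ?_, ?_⟩
  · rwa [coe_basisOfOrthonormalOfCardEqFinrank]
  · simp [coe_basisOfOrthonormalOfCardEqFinrank]

variable [Fintype ι] {b : OrthonormalBasis (Option ι) ℝ E}

theorem OrthonormalBasis.inner_smul_add_sum_of_coe_eq (hb : ⇑b = fun o => o.elim ξ e) (v : E) :
    ⟪ξ, v⟫_ℝ • ξ + ∑ i, ⟪e i, v⟫_ℝ • e i = v := by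
  simpa [Fintype.sum_option, hb] using b.sum_repr' v

theorem ContinuousLinearMap.apply_eq_sum_of_coe_eq (hb : ⇑b = fun o => o.elim ξ e)
    {A : E →L[ℝ] E} (hA : (A : E →ₗ[ℝ] E).IsSymmetric) (hAξ : A ξ = 0) (i : ι) :
    A (e i) = ∑ k, ⟪A (e i), e k⟫_ℝ • e k := by
  have hξ : ⟪ξ, A (e i)⟫_ℝ = 0 := by
    rw [← ContinuousLinearMap.coe_coe, ← hA, ContinuousLinearMap.coe_coe, hAξ, inner_zero_left]
  conv_lhs => rw [← b.inner_smul_add_sum_of_coe_eq hb (A (e i))]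
  simp [hξ, real_inner_comm]

theorem ContinuousLinearMap.injective_add_smulRight_of_det_ne_zero [DecidableEq ι]
    (hb : ⇑b = fun o => o.elim ξ e)
    {A : E →L[ℝ] E} (hA : (A : E →ₗ[ℝ] E).IsSymmetric) (hAξ : A ξ = 0)
    (hdet : (Matrix.of fun i j => ⟪A (e i), e j⟫_ℝ).det ≠ 0) :
    Function.Injective (A + (innerSL ℝ ξ).smulRight ξ) := by
  have hξ : ‖ξ‖ = 1 := by simpa [hb] using b.orthonormal.1 none
  refine (injective_iff_map_eq_zero _).mpr fun v hv => ?_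
  have hξv : ⟪ξ, v⟫_ℝ = 0 := by
    have := congrArg (⟪ξ, ·⟫_ℝ) hv
    simp only [add_apply, smulRight_apply, innerSL_apply_apply, inner_add_right,
      real_inner_smul_right, real_inner_self_eq_norm_sq, hξ, inner_zero_right] at this
    rwa [← ContinuousLinearMap.coe_coe, ← hA, ContinuousLinearMap.coe_coe, hAξ,
      inner_zero_left, zero_add, one_pow, mul_one] at this
  have hAv : A v = 0 := by simpa [hξv] using hv
  set a : ι → ℝ := fun i => ⟪e i, v⟫_ℝ
  have hvexp : v = ∑ i, a i • e i := by
    simpa [hξv] using (b.inner_smul_add_sum_of_coe_eq hb v).symm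
  have hvecMul : Matrix.vecMul a (Matrix.of fun i j => ⟪A (e i), e j⟫_ℝ) = 0 := by
    funext j
    have := congrArg (⟪·, e j⟫_ℝ) hAv
    simp only [hvexp, map_sum, map_smul, sum_inner, real_inner_smul_left, inner_zero_left] at this
    simpa [Matrix.vecMul, dotProduct] using this
  have ha : a = 0 := by
    simpa [Matrix.vecMul_vecMul, Matrix.mul_nonsing_inv _ (isUnit_iff_ne_zero.mpr hdet)]
      using congrArg (Matrix.vecMul · (Matrix.of fun i j => ⟪A (e i), e j⟫_ℝ)⁻¹) hvecMul
  simp [hvexp, ha]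

theorem mul_hessian_eq_smul_one [CompleteSpace E] [DecidableEq ι] {G : E → E} {U : E → ℝ}
    (hb : ⇑b = fun o => o.elim ξ e)
    (hG : DifferentiableAt ℝ G ξ) (hsymm : (fderiv ℝ G ξ : E →ₗ[ℝ] E).IsSymmetric)
    (hGξ : fderiv ℝ G ξ ξ = 0) (hU : DifferentiableAt ℝ (gradient U) (G ξ))
    (hpar : ∀ᶠ x in 𝓝 ξ, gradient U (G x) = (⟪x, gradient U (G x)⟫_ℝ / ⟪x, x⟫_ℝ) • x) :
    (Matrix.of fun i j => ⟪fderiv ℝ G ξ (e i), e j⟫_ℝ) *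
        (Matrix.of fun i j => fderiv ℝ (fderiv ℝ U) (G ξ) (e i) (e j)) =
      ⟪ξ, gradient U (G ξ)⟫_ℝ • 1 := by
  have hon := b.orthonormal
  rw [hb] at hon
  have hξ : ⟪ξ, ξ⟫_ℝ = 1 := by
    have hn : ‖ξ‖ = 1 := hon.1 none
    rw [real_inner_self_eq_norm_sq, hn, one_pow]
  have hpd : DifferentiableAt ℝ (fun x => gradient U (G x)) ξ := hU.comp ξ hG
  have hnum : DifferentiableAt ℝ (fun x => ⟪x, gradient U (G x)⟫_ℝ) ξ :=
    differentiableAt_id.inner ℝ hpd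
  have hden : DifferentiableAt ℝ (fun x : E => ⟪x, x⟫_ℝ) ξ :=
    differentiableAt_id.inner ℝ differentiableAt_id
  have hcd : DifferentiableAt ℝ (fun x => ⟪x, gradient U (G x)⟫_ℝ / ⟪x, x⟫_ℝ) ξ := by
    simp only [div_eq_mul_inv]
    exact hnum.mul (hden.inv (by rw [hξ]; exact one_ne_zero))
  ext i j
  have hcomp : fderiv ℝ (fun x => gradient U (G x)) ξ (e i) =
      fderiv ℝ (gradient U) (G ξ) (fderiv ℝ G ξ (e i)) := by
    rw [fderiv_fun_comp ξ hU hG]; rfl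
  have := congrArg (⟪·, e j⟫_ℝ) hcomp
  rw [fderiv_apply_of_eventuallyEq_smul_self hcd hpar (e i),
    ContinuousLinearMap.apply_eq_sum_of_coe_eq hb hsymm hGξ i] at this
  simp only [inner_add_left, real_inner_smul_left, map_sum, map_smul, sum_inner,
    inner_fderiv_gradient_apply, hξ, div_one] at this
  have he : ⟪e i, e j⟫_ℝ = if i = j then 1 else 0 :=
    orthonormal_iff_ite.mp (hon.comp some (Option.some_injective _)) i j
  have hξe : ⟪ξ, e j⟫_ℝ = 0 := hon.2 (Option.some_ne_none j).symm
  rw [he, hξe] at this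
  simpa [Matrix.mul_apply, Matrix.one_apply] using this.symm

end Frame

theorem Matrix.eq_smul_adjugate_of_mul_eq_smul_one {ι : Type*} [Fintype ι] [DecidableEq ι]
    {W Q : Matrix ι ι ℝ} {c : ℝ} (hWQ : W * Q = c • 1) (hdet : W.det ≠ 0) :
    Q = (W.det⁻¹ * c) • W.adjugate := by
  have hQ : Q = W⁻¹ * (W * Q) := by
    rw [← Matrix.mul_assoc, Matrix.nonsing_inv_mul _ (isUnit_iff_ne_zero.mpr hdet), Matrix.one_mul]
  rw [hQ, hWQ, Matrix.mul_smul, Matrix.mul_one, Matrix.inv_def, Ring.inverse_eq_inv, smul_smul,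
    mul_comm]

section Laplacian

variable {n : ℕ} {f : EuclideanSpace ℝ (Fin n) → ℝ}

theorem lap_eq_sum_fderiv_fderiv {x : EuclideanSpace ℝ (Fin n)}
    (hf : DifferentiableAt ℝ (fderiv ℝ f) x) :
    lap f x = ∑ i, fderiv ℝ (fderiv ℝ f) x (EuclideanSpace.single i 1)
      (EuclideanSpace.single i 1) := by
  refine Finset.sum_congr rfl fun i _ => ?_
  rw [fderiv_clm_apply hf (differentiableAt_const _)]
  simp

theorem lap_eq_trace {x : EuclideanSpace ℝ (Fin n)} (hf : DifferentiableAt ℝ (fderiv ℝ f) x) :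
    lap f x = LinearMap.trace ℝ _
      (fderiv ℝ (gradient f) x : EuclideanSpace ℝ (Fin n) →ₗ[ℝ] EuclideanSpace ℝ (Fin n)) := by
  rw [lap_eq_sum_fderiv_fderiv hf, ← sum_fderiv_fderiv_eq_trace (EuclideanSpace.basisFun _ ℝ)]
  simp

theorem lap_eq_add_sum_of_coe_eq {ι : Type*} [Fintype ι] {x ξ : EuclideanSpace ℝ (Fin n)}
    {e : ι → EuclideanSpace ℝ (Fin n)}
    {b : OrthonormalBasis (Option ι) ℝ (EuclideanSpace ℝ (Fin n))}
    (hb : ⇑b = fun o => o.elim ξ e) (hf : DifferentiableAt ℝ (fderiv ℝ f) x) :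
    lap f x = fderiv ℝ (fderiv ℝ f) x ξ ξ + ∑ i, fderiv ℝ (fderiv ℝ f) x (e i) (e i) := by
  rw [lap_eq_trace hf, ← sum_fderiv_fderiv_eq_trace b, Fintype.sum_option, hb]
  rfl

theorem continuous_lap (hf : ContDiff ℝ 2 f) : Continuous (lap f) := by
  have hf' := (hf.fderiv_right (m := 1) le_rfl)
  rw [show lap f = _ from funext fun x =>
    lap_eq_sum_fderiv_fderiv (hf'.differentiable one_ne_zero x)]
  exact continuous_finsetSum _ fun i _ =>
    ((hf'.continuous_fderiv one_ne_zero).clm_apply continuous_const).clm_apply continuous_const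

theorem lap_eq_of_mem_of_convex {Ω : Set (EuclideanSpace ℝ (Fin n))} (hΩ : Convex ℝ Ω)
    (hint : (interior Ω).Nonempty) (hcl : IsClosed Ω) (hf : ContDiff ℝ 2 f) {c : ℝ}
    (hlap : ∀ x ∈ interior Ω, lap f x = c) {x : EuclideanSpace ℝ (Fin n)} (hx : x ∈ Ω) :
    lap f x = c := by
  refine Set.EqOn.closure (f := lap f) (g := fun _ => c) hlap (continuous_lap hf)
    continuous_const ?_
  rwa [hΩ.closure_interior_eq_closure_of_nonempty_interior hint, hcl.closure_eq]

theorem nonneg_of_lap_neg {Ω : Set (EuclideanSpace ℝ (Fin n))} (hΩ : IsCompact Ω)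
    (hf : ContDiff ℝ 2 f) (hlap : ∀ x ∈ interior Ω, lap f x < 0)
    (hbd : ∀ x ∈ frontier Ω, f x = 0) {x : EuclideanSpace ℝ (Fin n)} (hx : x ∈ Ω) :
    0 ≤ f x := by
  obtain ⟨x₀, hx₀, hmin⟩ := hΩ.exists_isMinOn ⟨x, hx⟩ hf.continuous.continuousOn
  refine le_trans ?_ (hmin hx)
  by_cases hfr : x₀ ∈ frontier Ω
  · exact (hbd x₀ hfr).ge
  have hint : x₀ ∈ interior Ω := by
    rw [frontier, hΩ.isClosed.closure_eq] at hfr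
    by_contra h
    exact hfr ⟨hx₀, h⟩
  have hf' := (hf.fderiv_right (m := 1) le_rfl).differentiable one_ne_zero x₀
  have hloc : IsLocalMin f x₀ := hmin.isLocalMin (mem_interior_iff_mem_nhds.mp hint)
  have : 0 ≤ lap f x₀ := by
    rw [lap_eq_sum_fderiv_fderiv hf']
    exact Finset.sum_nonneg fun i _ =>
      hloc.fderiv_fderiv_apply_self_nonneg (hf.differentiable two_ne_zero) hf' _
  linarith [hlap x₀ hint]

end Laplacian

section SupportFunction

variable {E : Type*} [NormedAddCommGroup E] [InnerProductSpace ℝ E] {Ω : Set E}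

theorem notMem_interior_of_forall_inner_le {x y : E} (hx : x ≠ 0)
    (hmax : ∀ z ∈ Ω, ⟪x, z⟫_ℝ ≤ ⟪x, y⟫_ℝ) : y ∉ interior Ω := by
  intro hy
  have hloc : IsLocalMax (innerSL ℝ x) y :=
    Filter.eventually_of_mem (mem_interior_iff_mem_nhds.mp hy) hmax
  have h0 := hloc.fderiv_eq_zero
  rw [ContinuousLinearMap.fderiv] at h0
  exact hx (by simpa using congrArg (· x) h0)

theorem inner_lt_of_mem_interior {x y z : E} (hx : x ≠ 0)
    (hmax : ∀ w ∈ Ω, ⟪x, w⟫_ℝ ≤ ⟪x, y⟫_ℝ) (hz : z ∈ interior Ω) : ⟪x, z⟫_ℝ < ⟪x, y⟫_ℝ :=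
  (hmax z (interior_subset hz)).lt_of_ne fun heq =>
    notMem_interior_of_forall_inner_le hx (heq ▸ hmax) hz

variable [CompleteSpace E] {h : E → ℝ}

theorem IsMinOn.nonpos_of_gradient_eq_smul {U : E → ℝ} {y z ξ : E} {c : ℝ}
    (hmin : IsMinOn U Ω y) (hΩ : Convex ℝ Ω) (hy : y ∈ Ω) (hU : DifferentiableAt ℝ U y)
    (hξ : ξ ≠ 0) (hmax : ∀ w ∈ Ω, ⟪ξ, w⟫_ℝ ≤ ⟪ξ, y⟫_ℝ) (hz : z ∈ interior Ω)
    (hgrad : gradient U y = c • ξ) : c ≤ 0 := by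
  have hdir : 0 ≤ fderiv ℝ U y (z - y) :=
    hmin.localize.hasFDerivWithinAt_nonneg hU.hasFDerivAt.hasFDerivWithinAt
      (sub_mem_posTangentConeAt_of_segment_subset (hΩ.segment_subset hy (interior_subset hz)))
  have hlt : ⟪ξ, z - y⟫_ℝ < 0 := by
    rw [inner_sub_right, sub_neg]
    exact inner_lt_of_mem_interior hξ hmax hz
  rw [← inner_gradient_apply, hgrad, real_inner_smul_left] at hdir
  nlinarith

theorem gradient_eq_of_forall_inner_le (hΩ : IsCompact Ω)
    (hsupp : ∀ x, h x = sSup ((fun y => ⟪x, y⟫_ℝ) '' Ω)) {x y : E}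
    (hd : DifferentiableAt ℝ h x) (hy : y ∈ Ω) (hmax : ∀ z ∈ Ω, ⟪x, z⟫_ℝ ≤ ⟪x, y⟫_ℝ) :
    gradient h x = y := by
  have hle : ∀ z, ⟪y, z⟫_ℝ ≤ h z := fun z => by
    rw [hsupp z, real_inner_comm]
    exact le_csSup (hΩ.image (continuous_const.inner continuous_id)).bddAbove ⟨y, hy, rfl⟩
  have heq : h x = ⟪x, y⟫_ℝ := by
    rw [hsupp x]
    exact IsGreatest.csSup_eq ⟨⟨y, hy, rfl⟩, by rintro _ ⟨w, hw, rfl⟩; exact hmax w hw⟩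
  have hmin : IsLocalMin (fun z => h z - innerSL ℝ y z) x :=
    Filter.Eventually.of_forall fun z => by
      simp only [innerSL_apply_apply]
      rw [heq, real_inner_comm, sub_self, sub_nonneg]
      exact hle z
  have h0 := hmin.fderiv_eq_zero
  rw [fderiv_fun_sub hd (innerSL ℝ y).differentiableAt, ContinuousLinearMap.fderiv,
    sub_eq_zero] at h0
  rw [gradient, h0]
  exact (InnerProductSpace.toDual ℝ E).symm_apply_apply y

theorem gradient_mem_and_forall_inner_le (hΩ : IsCompact Ω) (hne : Ω.Nonempty)
    (hsupp : ∀ x, h x = sSup ((fun y => ⟪x, y⟫_ℝ) '' Ω)) {x : E} (hd : DifferentiableAt ℝ h x) :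
    gradient h x ∈ Ω ∧ ∀ z ∈ Ω, ⟪x, z⟫_ℝ ≤ ⟪x, gradient h x⟫_ℝ := by
  obtain ⟨y, hy, hmax⟩ :=
    hΩ.exists_isMaxOn hne (innerSL ℝ x).continuous.continuousOn
  rw [gradient_eq_of_forall_inner_le hΩ hsupp hd hy hmax]
  exact ⟨hy, hmax⟩

theorem gradient_mem_frontier (hΩ : IsCompact Ω) (hne : Ω.Nonempty)
    (hsupp : ∀ x, h x = sSup ((fun y => ⟪x, y⟫_ℝ) '' Ω)) {x : E} (hx : x ≠ 0)
    (hd : DifferentiableAt ℝ h x) : gradient h x ∈ frontier Ω := by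
  obtain ⟨hmem, hmax⟩ := gradient_mem_and_forall_inner_le hΩ hne hsupp hd
  rw [hΩ.isClosed.frontier_eq]
  exact ⟨hmem, notMem_interior_of_forall_inner_le hx hmax⟩

theorem gradient_smul_of_pos (hΩ : IsCompact Ω) (hne : Ω.Nonempty)
    (hsupp : ∀ x, h x = sSup ((fun y => ⟪x, y⟫_ℝ) '' Ω)) {x : E} {t : ℝ} (ht : 0 < t)
    (hd : DifferentiableAt ℝ h x) (hdt : DifferentiableAt ℝ h (t • x)) :
    gradient h (t • x) = gradient h x := by
  obtain ⟨hmem, hmax⟩ := gradient_mem_and_forall_inner_le hΩ hne hsupp hd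
  refine gradient_eq_of_forall_inner_le hΩ hsupp hdt hmem fun z hz => ?_
  simp only [real_inner_smul_left]
  exact mul_le_mul_of_nonneg_left (hmax z hz) ht.le

theorem fderiv_gradient_apply_self (hΩ : IsCompact Ω) (hne : Ω.Nonempty)
    (hsupp : ∀ x, h x = sSup ((fun y => ⟪x, y⟫_ℝ) '' Ω)) (hsm : ContDiffOn ℝ 2 h {x | x ≠ 0})
    {x : E} (hx : x ≠ 0) : fderiv ℝ (gradient h) x x = 0 := by
  have hdiff : ∀ y : E, y ≠ 0 → DifferentiableAt ℝ h y := fun y hy =>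
    (hsm.contDiffAt (isOpen_ne.mem_nhds hy)).differentiableAt two_ne_zero
  refine fderiv_apply_self_eq_zero_of_smul_eq ?_ fun t ht =>
    gradient_smul_of_pos hΩ hne hsupp ht (hdiff x hx) (hdiff _ (smul_ne_zero ht.ne' hx))
  exact ((hsm.gradient isOpen_ne).contDiffAt (isOpen_ne.mem_nhds hx)).differentiableAt
    one_ne_zero

theorem eventually_gradient_comp_gradient_eq_smul [FiniteDimensional ℝ E] {U : E → ℝ}
    (hΩ : IsCompact Ω) (hne : Ω.Nonempty)
    (hsupp : ∀ x, h x = sSup ((fun y => ⟪x, y⟫_ℝ) '' Ω)) (hsm : ContDiffOn ℝ 2 h {x | x ≠ 0})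
    (hU : Differentiable ℝ U) (hbd : ∀ x ∈ frontier Ω, U x = 0) {ξ : E} (hξ : ξ ≠ 0)
    (hinj : Function.Injective (fderiv ℝ (gradient h) ξ + (innerSL ℝ ξ).smulRight ξ)) :
    ∀ᶠ x in 𝓝 ξ,
      gradient U (gradient h x) = (⟪x, gradient U (gradient h x)⟫_ℝ / ⟪x, x⟫_ℝ) • x := by
  have hopen : IsOpen {x : E | x ≠ 0} := isOpen_ne
  have hG := hsm.gradient hopen
  have hdiff : ∀ x : E, x ≠ 0 → DifferentiableAt ℝ h x := fun x hx =>
    (hsm.contDiffAt (hopen.mem_nhds hx)).differentiableAt two_ne_zero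
  have hB : ContinuousAt (fun x => fderiv ℝ (gradient h) x + (innerSL ℝ x).smulRight x) ξ :=
    ((hG.continuousOn_fderiv_of_isOpen hopen le_rfl).continuousAt (hopen.mem_nhds hξ)).add
      ((ContinuousLinearMap.smulRightL ℝ E E).continuous₂.comp
        ((innerSL ℝ).continuous.prodMk continuous_id)).continuousAt
  have hunit : IsUnit (fderiv ℝ (gradient h) ξ + (innerSL ℝ ξ).smulRight ξ) :=
    ContinuousLinearMap.isUnit_iff_bijective.mpr ⟨hinj, LinearMap.injective_iff_surjective.mp hinj⟩
  filter_upwards [hopen.mem_nhds hξ, hB.eventually (Units.isOpen.mem_nhds hunit)]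
    with x hx hxunit
  have hGx : DifferentiableAt ℝ (gradient h) x :=
    (hG.contDiffAt (hopen.mem_nhds hx)).differentiableAt one_ne_zero
  refine ContinuousLinearMap.eq_div_smul_of_apply_eq_zero ?_
    (ContinuousLinearMap.isUnit_iff_bijective.mp hxunit).1 ?_
  · exact fderiv_gradient_apply_self hΩ hne hsupp hsm hx
  · refine fderiv_apply_gradient_eq_zero (c := 0) hGx
      (hsm.contDiffAt (hopen.mem_nhds hx)).isSymmetric_fderiv_gradient (hU _) ?_
    filter_upwards [hopen.mem_nhds hx] with y hy
    exact hbd _ (gradient_mem_frontier hΩ hne hsupp hy (hdiff y hy))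

theorem gradient_comp_gradient_eq_smul_and_mul_hessian_eq_smul_one [FiniteDimensional ℝ E]
    {ι : Type*} [Fintype ι] [DecidableEq ι] {U : E → ℝ} {ξ : E} {e : ι → E}
    {b : OrthonormalBasis (Option ι) ℝ E} (hΩ : IsCompact Ω) (hne : Ω.Nonempty)
    (hsupp : ∀ x, h x = sSup ((fun y => ⟪x, y⟫_ℝ) '' Ω)) (hsm : ContDiffOn ℝ 2 h {x | x ≠ 0})
    (hU : ContDiff ℝ 2 U) (hbd : ∀ x ∈ frontier Ω, U x = 0) (hb : ⇑b = fun o => o.elim ξ e)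
    (hdet : (Matrix.of fun i j => fderiv ℝ (fderiv ℝ h) ξ (e i) (e j)).det ≠ 0) :
    gradient U (gradient h ξ) = ⟪ξ, gradient U (gradient h ξ)⟫_ℝ • ξ ∧
      (Matrix.of fun i j => fderiv ℝ (fderiv ℝ h) ξ (e i) (e j)) *
          (Matrix.of fun i j => fderiv ℝ (fderiv ℝ U) (gradient h ξ) (e i) (e j)) =
        ⟪ξ, gradient U (gradient h ξ)⟫_ℝ • 1 := by
  have hξ : ‖ξ‖ = 1 := by simpa [hb] using b.orthonormal.1 none
  have hξ0 : ξ ≠ 0 := norm_ne_zero_iff.mp (by simp [hξ])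
  have hh : ContDiffAt ℝ 2 h ξ := hsm.contDiffAt (isOpen_ne.mem_nhds hξ0)
  have hGξ := fderiv_gradient_apply_self hΩ hne hsupp hsm hξ0
  simp_rw [← inner_fderiv_gradient_apply h] at hdet ⊢
  have hpar := eventually_gradient_comp_gradient_eq_smul hΩ hne hsupp hsm
    (hU.differentiable two_ne_zero) hbd hξ0
    (ContinuousLinearMap.injective_add_smulRight_of_det_ne_zero hb
      hh.isSymmetric_fderiv_gradient hGξ hdet)
  refine ⟨?_, mul_hessian_eq_smul_one hb
    (((hsm.gradient isOpen_ne).contDiffAt (isOpen_ne.mem_nhds hξ0)).differentiableAt one_ne_zero)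
    hh.isSymmetric_fderiv_gradient hGξ
    ((hU.fderiv_right (m := 1) le_rfl).differentiable one_ne_zero _).gradient hpar⟩
  simpa [real_inner_self_eq_norm_sq, hξ] using hpar.self_of_nhds

end SupportFunction

/-- Lemma 3.2 (ii): normal-normal component of the Hessian of the torsion function:
`(∇²U(F(ξ)) ξ) · ξ = κ |∇U(F(ξ))| Σ_i c_{ii}(ξ) - 2`, where `κ = (det W)⁻¹` is the Gauss
curvature and `c = adjugate W` the cofactor matrix of the reverse Weingarten matrix
`W = (h_{ij} + h δ_{ij})`. -/
theorem stmt_9 (n : ℕ) (Ω : Set (EuclideanSpace ℝ (Fin n)))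
    (hΩc : IsCompact Ω) (hΩconv : Convex ℝ Ω) (hΩint : (interior Ω).Nonempty)
    (h : EuclideanSpace ℝ (Fin n) → ℝ)
    (hsupp : ∀ x, h x = sSup ((fun y => ⟪x, y⟫_ℝ) '' Ω))
    -- `Ω` of class `C²₊`: `h` is `C²` away from the origin,
    (hsm : ContDiffOn ℝ 2 h {x | x ≠ 0})
    (F : EuclideanSpace ℝ (Fin n) → EuclideanSpace ℝ (Fin n))
    -- `F` is the inverse Gauss map: `F x` is the boundary point with outer normal `x`:
    (hFmax : ∀ x, ‖x‖ = 1 → F x ∈ frontier Ω ∧ ∀ y ∈ Ω, ⟪x, y⟫_ℝ ≤ ⟪x, F x⟫_ℝ)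
    (U : EuclideanSpace ℝ (Fin n) → ℝ)
    -- `U ∈ C²(closure Ω)` solves the torsion problem:
    (hUsm : ContDiff ℝ 2 U)
    (hlap : ∀ x ∈ interior Ω, lap U x = -2)
    (hbd : ∀ x ∈ frontier Ω, U x = 0)
    (ξ : EuclideanSpace ℝ (Fin n)) (hξ : ‖ξ‖ = 1)
    -- a local orthonormal frame of the tangent space at `ξ`:
    (e : Fin (n - 1) → EuclideanSpace ℝ (Fin n)) (he : Orthonormal ℝ e)
    (heξ : ∀ i, ⟪e i, ξ⟫_ℝ = 0)
    -- the reverse Weingarten matrix `(h_{ij} + h δ_{ij})`: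
    (W : Matrix (Fin (n - 1)) (Fin (n - 1)) ℝ)
    (hW : ∀ i j, W i j = iteratedFDeriv ℝ 2 h ξ ![e i, e j])
    -- `W` is positive definite (positive Gauss curvature):
    (hWpos : W.PosDef) :
    iteratedFDeriv ℝ 2 U (F ξ) ![ξ, ξ] =
      W.det⁻¹ * ‖gradient U (F ξ)‖ * (∑ i, W.adjugate i i) - 2 := by
  have hξ0 : ξ ≠ 0 := norm_ne_zero_iff.mp (by simp [hξ])
  have hn : 0 < n := Nat.pos_of_ne_zero fun hn => hξ0 (by subst hn; exact Subsingleton.elim _ _)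
  obtain ⟨b, hb⟩ := exists_orthonormalBasis_optionElim hξ he heξ (by simp; omega)
  have hFΩ : F ξ ∈ Ω := hΩc.isClosed.frontier_subset (hFmax ξ hξ).1
  have hGF : gradient h ξ = F ξ := gradient_eq_of_forall_inner_le hΩc hsupp
    ((hsm.contDiffAt (isOpen_ne.mem_nhds hξ0)).differentiableAt two_ne_zero) hFΩ (hFmax ξ hξ).2
  have hWh : W = Matrix.of fun i j => fderiv ℝ (fderiv ℝ h) ξ (e i) (e j) := by
    ext i j
    simp [hW, iteratedFDeriv_two_apply]
  have hdet : W.det ≠ 0 := hWpos.det_pos.ne'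
  obtain ⟨hgrad, hWQ⟩ := gradient_comp_gradient_eq_smul_and_mul_hessian_eq_smul_one hΩc
    (hΩint.mono interior_subset) hsupp hsm hUsm hbd hb (hWh ▸ hdet)
  rw [← hWh] at hWQ
  rw [hGF] at hWQ hgrad
  set c := ⟪ξ, gradient U (F ξ)⟫_ℝ
  have hUmin : IsMinOn U Ω (F ξ) := fun x hx => by
    simpa [hbd _ (hFmax ξ hξ).1] using
      nonneg_of_lap_neg hΩc hUsm (fun y hy => by simp [hlap y hy]) hbd hx
  have hc : c ≤ 0 := hUmin.nonpos_of_gradient_eq_smul hΩconv hFΩ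
    (hUsm.differentiable two_ne_zero _) hξ0 (hFmax ξ hξ).2 hΩint.some_mem hgrad
  have hlapF := lap_eq_of_mem_of_convex hΩconv hΩint hΩc.isClosed hUsm hlap hFΩ
  rw [lap_eq_add_sum_of_coe_eq hb
    ((hUsm.fderiv_right (m := 1) le_rfl).differentiable one_ne_zero _)] at hlapF
  have htr := congrArg Matrix.trace (Matrix.eq_smul_adjugate_of_mul_eq_smul_one hWQ hdet)
  simp only [Matrix.trace, Matrix.diag, Matrix.of_apply, Matrix.smul_apply, smul_eq_mul,
    ← Finset.mul_sum] at htr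
  rw [iteratedFDeriv_two_apply, hgrad, norm_smul, hξ, mul_one, Real.norm_of_nonpos hc]
  simp only [Matrix.cons_val_zero, Matrix.cons_val_one]
  linear_combination hlapF - htr
end

section
/- Let Ω_t, t ∈ (-ε,ε), be convex bodies of class C²₊ with support functions h_t = h + tφ where φ ∈ C^∞(S^{n-1}), and let U(·,t) be the torsion function of Ω_t. Writing F(ξ,t) for the inverse Gauss map of Ω_t, the boundary values of the derivative U̇ = ∂U/∂t satisfy U̇(F(ξ,t),t) = |∇U(F(ξ,t),t)|·φ(ξ) for all ξ ∈ S^{n-1}. -/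
open scoped InnerProductSpace

set_option maxHeartbeats 1000000

open Filter Set Topology

/-- Second derivative test: at a local minimum, the second derivative is nonnegative. -/
lemma second_deriv_test {g g' : ℝ → ℝ} {a : ℝ}
    (hg : ∀ r, HasDerivAt g (g' r) r)
    (hmin : IsLocalMin g 0) (ha : HasDerivAt g' a 0) : 0 ≤ a := by
  by_contra hlt
  push_neg at hlt
  have hg'0 : g' 0 = 0 := by
    have h := hmin.deriv_eq_zero
    rwa [(hg 0).deriv] at h
  have hslope : Tendsto (slope g' 0) (𝓝[≠] 0) (𝓝 a) :=
    hasDerivAt_iff_tendsto_slope.mp ha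
  have hev : ∀ᶠ r in 𝓝[>] (0:ℝ), slope g' 0 r < a / 2 := by
    have hmono : 𝓝[>] (0:ℝ) ≤ 𝓝[≠] (0:ℝ) :=
      nhdsWithin_mono _ (fun x hx => ne_of_gt hx)
    exact (hslope.mono_left hmono).eventually (gt_mem_nhds (by linarith))
  obtain ⟨δ, hδmem, hδ⟩ := mem_nhdsGT_iff_exists_Ioo_subset.mp hev
  have hδpos : 0 < δ := hδmem
  have hneg : ∀ r ∈ Ioo (0:ℝ) δ, deriv g r < 0 := by
    intro r hr
    have h1 : slope g' 0 r < a / 2 := hδ hr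
    rw [slope_def_field, hg'0, sub_zero, sub_zero, div_lt_iff₀ hr.1] at h1
    have : g' r < 0 := lt_of_lt_of_le h1 (by nlinarith [hr.1])
    rwa [(hg r).deriv]
  have hanti : StrictAntiOn g (Icc 0 δ) := by
    refine strictAntiOn_of_deriv_neg (convex_Icc 0 δ) ?_ ?_
    · exact fun r _ => (hg r).continuousAt.continuousWithinAt
    · rw [interior_Icc]; exact hneg
  obtain ⟨δ₂, hδ₂, H⟩ := Metric.eventually_nhds_iff.mp hmin
  set r := min (δ/2) (δ₂/2) with hr
  have hr0 : 0 < r := by positivity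
  have hrδ : r ≤ δ/2 := min_le_left _ _
  have h1 : g r < g 0 := hanti ⟨le_refl 0, hδpos.le⟩ ⟨hr0.le, by linarith⟩ hr0
  have h2 : g 0 ≤ g r := H (by
    rw [Real.dist_eq, sub_zero, abs_of_pos hr0]
    have : r ≤ δ₂/2 := min_le_right _ _
    linarith)
  linarith

/-- One-sided derivative at a one-sided local minimum is nonnegative. -/
lemma right_deriv_nonneg {g : ℝ → ℝ} {c : ℝ}
    (hg : HasDerivAt g c 0) (hpos : ∀ s ∈ Set.Ioc (0:ℝ) 1, g 0 ≤ g s) : 0 ≤ c := by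
  have hmono : 𝓝[>] (0:ℝ) ≤ 𝓝[≠] (0:ℝ) :=
    nhdsWithin_mono _ (fun x hx => ne_of_gt hx)
  have hT : Tendsto (slope g 0) (𝓝[>] 0) (𝓝 c) :=
    (hasDerivAt_iff_tendsto_slope.mp hg).mono_left hmono
  refine ge_of_tendsto hT ?_
  filter_upwards [Ioc_mem_nhdsGT one_pos] with s hs
  rw [slope_def_field, sub_zero]
  exact div_nonneg (sub_nonneg.2 (hpos s hs)) hs.1.le


/-- Minimum principle for superharmonic functions: the torsion function is nonnegative. -/
lemma torsion_nonneg {n : ℕ} {Ωt : Set (EuclideanSpace ℝ (Fin n))}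
    {Ut : EuclideanSpace ℝ (Fin n) → ℝ}
    (hc : IsCompact Ωt) (hne : Ωt.Nonempty) (hsm : ContDiff ℝ 2 Ut)
    (hlap : ∀ x ∈ interior Ωt, lap Ut x = -2)
    (hbd : ∀ x ∈ frontier Ωt, Ut x = 0) :
    ∀ y ∈ Ωt, 0 ≤ Ut y := by
  obtain ⟨x₀, hx₀, hmin⟩ := hc.exists_isMinOn hne hsm.continuous.continuousOn
  by_cases hx₀i : x₀ ∈ interior Ωt
  · exfalso
    set e := fun i : Fin n => EuclideanSpace.single i (1:ℝ) with he
    have hsum : ∑ i : Fin n, fderiv ℝ (fun y => fderiv ℝ Ut y (e i)) x₀ (e i) = -2 :=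
      hlap x₀ hx₀i
    have hex : ∃ i, fderiv ℝ (fun y => fderiv ℝ Ut y (e i)) x₀ (e i) < 0 := by
      by_contra hall
      push_neg at hall
      have h0 : (0:ℝ) ≤ ∑ i : Fin n, fderiv ℝ (fun y => fderiv ℝ Ut y (e i)) x₀ (e i) :=
        Finset.sum_nonneg fun i _ => hall i
      rw [hsum] at h0; linarith
    obtain ⟨i, hai⟩ := hex
    set γ : ℝ → EuclideanSpace ℝ (Fin n) := fun r => x₀ + r • e i with hγdef
    have hγ0 : γ 0 = x₀ := by simp [hγdef]
    have hγ : ∀ r, HasDerivAt γ (e i) r := by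
      intro r
      simpa [hγdef] using ((hasDerivAt_id r).smul_const (e i)).const_add x₀
    have hUtd : Differentiable ℝ Ut := hsm.differentiable (by norm_num)
    have hg : ∀ r, HasDerivAt (fun r => Ut (γ r)) (fderiv ℝ Ut (γ r) (e i)) r := fun r =>
      (hUtd (γ r)).hasFDerivAt.comp_hasDerivAt r (hγ r)
    have hfd : ContDiff ℝ 1 (fderiv ℝ Ut) := hsm.fderiv_right (by norm_num)
    have hφc : ContDiff ℝ 1 (fun y => fderiv ℝ Ut y (e i)) := hfd.clm_apply contDiff_const
    have hφd : DifferentiableAt ℝ (fun y => fderiv ℝ Ut y (e i)) (γ 0) := by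
      rw [hγ0]; exact (hφc.differentiable one_ne_zero) x₀
    have ha : HasDerivAt (fun r => fderiv ℝ Ut (γ r) (e i))
        (fderiv ℝ (fun y => fderiv ℝ Ut y (e i)) x₀ (e i)) 0 := by
      have := hφd.hasFDerivAt.comp_hasDerivAt 0 (hγ 0)
      rwa [hγ0] at this
    have hloc : IsLocalMin (fun r => Ut (γ r)) 0 := by
      have hcont : Continuous γ := by fun_prop
      have hev : ∀ᶠ r in 𝓝 (0:ℝ), γ r ∈ interior Ωt :=
        hcont.continuousAt.eventually_mem (isOpen_interior.mem_nhds (hγ0 ▸ hx₀i))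
      filter_upwards [hev] with r hr
      have := isMinOn_iff.mp hmin (γ r) (interior_subset hr)
      simpa [hγ0] using this
    have := second_deriv_test hg hloc ha
    linarith
  · have hfr : x₀ ∈ frontier Ωt := by
      rw [hc.isClosed.frontier_eq]; exact ⟨hx₀, hx₀i⟩
    intro y hy
    have := isMinOn_iff.mp hmin y hy
    rwa [hbd x₀ hfr] at this



/-- Let `Ω_t`, `t ∈ (-ε,ε)`, be convex bodies of class `C²₊` with support functions
`h + tφ`, torsion functions `U(·,t)` and inverse Gauss maps `F(·,t)`. Then the
`t`-derivative `U̇ = ∂U/∂t` has boundary values `U̇(F(ξ,t),t) = |∇U(F(ξ,t),t)| φ(ξ)`. -/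
theorem stmt_18 (n : ℕ) (ε : ℝ) (hε : 0 < ε)
    (h φ : EuclideanSpace ℝ (Fin n) → ℝ)
    -- `φ ∈ C^∞(S^{n-1})` (extended 1-homogeneously together with `h`):
    (hφ : ContDiffOn ℝ (⊤ : ℕ∞) φ {x | x ≠ 0})
    (Ω : ℝ → Set (EuclideanSpace ℝ (Fin n)))
    -- `Ω t` is a convex body of class `C²₊` with support function `h + tφ`:
    (hΩ : ∀ t ∈ Set.Ioo (-ε) ε, IsCompact (Ω t) ∧ Convex ℝ (Ω t) ∧
      (interior (Ω t)).Nonempty)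
    (hsupp : ∀ t ∈ Set.Ioo (-ε) ε, ∀ x,
      sSup ((fun y => ⟪x, y⟫_ℝ) '' Ω t) = h x + t * φ x)
    (hsm : ∀ t ∈ Set.Ioo (-ε) ε, ContDiffOn ℝ 2 (fun x => h x + t * φ x) {x | x ≠ 0})
    (U : ℝ → EuclideanSpace ℝ (Fin n) → ℝ)
    -- `U(·,t)` is the torsion function of `Ω t`:
    (hUsm : ∀ t ∈ Set.Ioo (-ε) ε, ContDiff ℝ 2 (U t))
    (hlap : ∀ t ∈ Set.Ioo (-ε) ε, ∀ x ∈ interior (Ω t), lap (U t) x = -2)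
    (hbd : ∀ t ∈ Set.Ioo (-ε) ε, ∀ x ∈ frontier (Ω t), U t x = 0)
    (F : EuclideanSpace ℝ (Fin n) → ℝ → EuclideanSpace ℝ (Fin n))
    -- `F(·,t)` is the inverse Gauss map of `Ω t`:
    (hF : ∀ t ∈ Set.Ioo (-ε) ε, ∀ x, ‖x‖ = 1 →
      F x t ∈ frontier (Ω t) ∧ ∀ y ∈ Ω t, ⟪x, y⟫_ℝ ≤ ⟪x, F x t⟫_ℝ)
    (t : ℝ) (ht : t ∈ Set.Ioo (-ε) ε)
    (ξ : EuclideanSpace ℝ (Fin n)) (hξ : ‖ξ‖ = 1)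
    -- `U` is differentiable in `t` (jointly) and `F` is differentiable in `t`:
    (hUd : DifferentiableAt ℝ (fun p : ℝ × EuclideanSpace ℝ (Fin n) => U p.1 p.2)
      (t, F ξ t))
    (hFd : DifferentiableAt ℝ (fun s => F ξ s) t) :
    deriv (fun s => U s (F ξ t)) t = ‖gradient (U t) (F ξ t)‖ * φ ξ := by
  obtain ⟨hcomp, hconv, hint⟩ := hΩ t ht
  obtain ⟨hpfr, hpmax⟩ := hF t ht ξ hξ
  set p := F ξ t with hpdef
  have hclosed : IsClosed (Ω t) := hcomp.isClosed
  have hfr_sub : frontier (Ω t) ⊆ Ω t := by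
    rw [hclosed.frontier_eq]; exact Set.diff_subset
  have hpΩ : p ∈ Ω t := hfr_sub hpfr
  clear_value p
  have hUt2 : ContDiff ℝ 2 (U t) := hUsm t ht
  have hUtd : Differentiable ℝ (U t) := hUt2.differentiable (by norm_num)
  have hUp0 : U t p = 0 := hbd t ht p hpfr
  have hU0 : ∀ y ∈ Ω t, 0 ≤ U t y :=
    torsion_nonneg hcomp ⟨hint.some, interior_subset hint.some_mem⟩ hUt2
      (hlap t ht) (hbd t ht)
  set G := gradient (U t) p with hGdef
  have hGinner : ∀ v, ⟪G, v⟫_ℝ = fderiv ℝ (U t) p v := by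
    intro v
    rw [hGdef]
    exact InnerProductSpace.toDual_symm_apply
  clear_value G
  -- Step 1: -G is an outer normal vector of Ω t at p
  have hstep1 : ∀ z ∈ Ω t, 0 ≤ ⟪G, z - p⟫_ℝ := by
    intro z hz
    have hline : ∀ r : ℝ, HasDerivAt (fun s : ℝ => p + s • (z - p)) (z - p) r := by
      intro r
      simpa using ((hasDerivAt_id r).smul_const (z - p)).const_add p
    have h0 : p + (0:ℝ) • (z - p) = p := by simp
    have h1 : HasDerivAt (fun s : ℝ => U t (p + s • (z - p)))
        (fderiv ℝ (U t) (p + (0:ℝ) • (z - p)) (z - p)) 0 :=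
      (hUtd _).hasFDerivAt.comp_hasDerivAt 0 (hline 0)
    rw [h0] at h1
    have hc := right_deriv_nonneg h1 (fun s hs => by
      have hmem : p + s • (z - p) ∈ Ω t := hconv.add_smul_sub_mem hpΩ hz ⟨hs.1.le, hs.2⟩
      have := hU0 _ hmem
      simpa [hUp0] using this)
    rw [hGinner]
    exact hc
  -- joint derivative bookkeeping
  set W := fderiv ℝ (fun q : ℝ × EuclideanSpace ℝ (Fin n) => U q.1 q.2) (t, p) with hWdef
  have hWd : HasFDerivAt (fun q : ℝ × EuclideanSpace ℝ (Fin n) => U q.1 q.2) W (t, p) :=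
    hUd.hasFDerivAt
  set Fd := deriv (fun s => F ξ s) t with hFddef
  have hγ1 : HasDerivAt (fun s => (s, F ξ s)) ((1:ℝ), Fd) t :=
    (hasDerivAt_id t).prodMk hFd.hasDerivAt
  clear_value W Fd
  have hWd2 : HasFDerivAt (fun q : ℝ × EuclideanSpace ℝ (Fin n) => U q.1 q.2) W (t, F ξ t) := by
    rw [← hpdef]; exact hWd
  have hgc : HasDerivAt (fun s => U s (F ξ s)) (W ((1:ℝ), Fd)) t :=
    by have hc1 := hWd2.comp_hasDerivAt t hγ1; exact hc1
  have hzero : W ((1:ℝ), Fd) = 0 := by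
    have hev : (fun s => U s (F ξ s)) =ᶠ[𝓝 t] fun _ => (0:ℝ) := by
      filter_upwards [isOpen_Ioo.mem_nhds ht] with s hs
      exact hbd s hs _ (hF s hs ξ hξ).1
    have h0 : HasDerivAt (fun s => U s (F ξ s)) 0 t :=
      (hasDerivAt_const t (0:ℝ)).congr_of_eventuallyEq hev
    exact hgc.unique h0
  have hγ2 : HasDerivAt (fun s : ℝ => (s, p)) ((1:ℝ), (0:EuclideanSpace ℝ (Fin n))) t :=
    (hasDerivAt_id t).prodMk (hasDerivAt_const t p)
  have htar : HasDerivAt (fun s => U s p) (W ((1:ℝ), (0:EuclideanSpace ℝ (Fin n)))) t :=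
    by have hc2 := hWd.comp_hasDerivAt t hγ2; exact hc2
  have hsl : ∀ v, W ((0:ℝ), v) = fderiv ℝ (U t) p v := by
    intro v
    have hj : HasFDerivAt (fun x : EuclideanSpace ℝ (Fin n) => ((t, x) : ℝ × EuclideanSpace ℝ (Fin n)))
        (((0 : EuclideanSpace ℝ (Fin n) →L[ℝ] ℝ)).prod (ContinuousLinearMap.id ℝ _)) p :=
      (hasFDerivAt_const t p).prodMk (hasFDerivAt_id p)
    have h2 : HasFDerivAt (U t)
        (W.comp (((0 : EuclideanSpace ℝ (Fin n) →L[ℝ] ℝ)).prod (ContinuousLinearMap.id ℝ _))) p :=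
      hWd.comp p hj
    rw [h2.fderiv]
    simp
  have hderiv_eq : deriv (fun s => U s p) t = -(fderiv ℝ (U t) p Fd) := by
    rw [htar.deriv, ← hsl Fd]
    have hadd : ((1:ℝ), Fd) = ((1:ℝ), (0:EuclideanSpace ℝ (Fin n))) + ((0:ℝ), Fd) := by
      simp
    rw [hadd, map_add] at hzero
    linarith
  -- boundary variation in direction ξ
  have hcontinner : Continuous (fun y : EuclideanSpace ℝ (Fin n) => ⟪ξ, y⟫_ℝ) :=
    continuous_const.inner continuous_id
  have hB : ⟪ξ, Fd⟫_ℝ = φ ξ := by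
    have hψt : ⟪ξ, p⟫_ℝ = h ξ + t * φ ξ := by
      rw [← hsupp t ht ξ]
      apply le_antisymm
      · exact le_csSup ((hcomp.image hcontinner).bddAbove) ⟨p, hpΩ, rfl⟩
      · refine csSup_le ⟨_, ⟨p, hpΩ, rfl⟩⟩ ?_
        rintro y ⟨w, hw, rfl⟩
        exact hpmax w hw
    have hψd : HasDerivAt (fun s => h ξ + s * φ ξ - ⟪ξ, F ξ s⟫_ℝ) (φ ξ - ⟪ξ, Fd⟫_ℝ) t := by
      have h1 : HasDerivAt (fun s : ℝ => h ξ + s * φ ξ) (φ ξ) t := by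
        simpa using (hasDerivAt_mul_const (φ ξ)).const_add (h ξ)
      have h2 : HasDerivAt (fun s => ⟪ξ, F ξ s⟫_ℝ) (⟪ξ, Fd⟫_ℝ) t := by
        rw [hFddef]
        simpa using HasDerivAt.inner ℝ (hasDerivAt_const t ξ) hFd.hasDerivAt
      exact h1.sub h2
    have hminψ : IsLocalMin (fun s => h ξ + s * φ ξ - ⟪ξ, F ξ s⟫_ℝ) t := by
      filter_upwards [isOpen_Ioo.mem_nhds ht] with s hs
      have hfs : F ξ s ∈ Ω s := by
        have := (hF s hs ξ hξ).1
        rw [(hΩ s hs).1.isClosed.frontier_eq] at this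
        exact this.1
      have h3 : ⟪ξ, F ξ s⟫_ℝ ≤ h ξ + s * φ ξ := by
        rw [← hsupp s hs ξ]
        exact le_csSup (((hΩ s hs).1.image hcontinner).bddAbove) ⟨F ξ s, hfs, rfl⟩
      show h ξ + t * φ ξ - ⟪ξ, F ξ t⟫_ℝ ≤ h ξ + s * φ ξ - ⟪ξ, F ξ s⟫_ℝ
      rw [← hpdef]
      linarith [hψt, h3]
    have h4 := hminψ.deriv_eq_zero
    rw [hψd.deriv] at h4
    linarith
  by_cases hG0 : G = 0
  · rw [hderiv_eq, ← hGinner Fd, hG0]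
    simp
  -- the gradient points along the inner normal
  have hdir : G = (-‖G‖) • ξ := by
    have hGn : (0:ℝ) < ‖G‖ := norm_pos_iff.mpr hG0
    set u := (‖G‖)⁻¹ • (-G) with hudef
    have hGu : G = -(‖G‖ • u) := by
      rw [hudef, smul_smul, mul_inv_cancel₀ (ne_of_gt hGn), one_smul, neg_neg]
    clear_value u
    have hu1 : ‖u‖ = 1 := by
      rw [hudef, norm_smul, norm_neg, norm_inv, Real.norm_eq_abs, abs_of_nonneg (norm_nonneg G)]
      field_simp
    have humax : ∀ y ∈ Ω t, ⟪u, y - p⟫_ℝ ≤ 0 := by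
      intro y hy
      have h1 := hstep1 y hy
      rw [hudef, real_inner_smul_left, inner_neg_left]
      have h2 : (0:ℝ) ≤ (‖G‖)⁻¹ := inv_nonneg.mpr (norm_nonneg G)
      nlinarith
    obtain ⟨z, hz⟩ := hint
    have hzΩ : z ∈ Ω t := interior_subset hz
    have hδ : 0 < ⟪u, p - z⟫_ℝ := by
      obtain ⟨r₁, hr₁, hball⟩ := Metric.isOpen_iff.mp isOpen_interior z hz
      have hmem : z + (r₁/2) • u ∈ Ω t := by
        apply interior_subset
        apply hball
        rw [Metric.mem_ball, dist_eq_norm]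
        have heq : z + (r₁/2) • u - z = (r₁/2) • u := by module
        rw [heq, norm_smul, hu1, Real.norm_eq_abs, abs_of_nonneg (by linarith)]
        linarith
      have h1 := humax _ hmem
      have h2 : z + (r₁/2) • u - p = (z - p) + (r₁/2) • u := by module
      rw [h2, inner_add_right, real_inner_smul_right, real_inner_self_eq_norm_sq, hu1] at h1
      have h3 : ⟪u, p - z⟫_ℝ = -⟪u, z - p⟫_ℝ := by
        rw [← inner_neg_right]; congr 1; module
      rw [h3]; nlinarith
    have hueq : u = ξ := by
      by_contra hne
      have habs : |⟪ξ, u⟫_ℝ| ≤ 1 := by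
        have hcs := abs_real_inner_le_norm ξ u
        rwa [hξ, hu1, one_mul] at hcs
      have hne1 : ⟪ξ, u⟫_ℝ ≠ 1 := by
        intro hc
        apply hne
        have h5 : ‖u - ξ‖^2 = 0 := by
          rw [norm_sub_sq_real, hξ, hu1, real_inner_comm, hc]; ring
        have h6 : u - ξ = 0 := norm_eq_zero.mp (pow_eq_zero_iff two_ne_zero |>.mp h5)
        exact sub_eq_zero.mp h6
      have hnem1 : ⟪ξ, u⟫_ℝ ≠ -1 := by
        intro hc
        have h5 : ‖u + ξ‖^2 = 0 := by
          rw [norm_add_sq_real, hξ, hu1, real_inner_comm, hc]; ring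
        have h6 : u = -ξ := by
          have h7 : u + ξ = 0 := norm_eq_zero.mp (pow_eq_zero_iff two_ne_zero |>.mp h5)
          linear_combination (norm := module) h7
        have h7 := hpmax z hzΩ
        rw [h6, inner_neg_left, inner_sub_right] at hδ
        linarith
      have hsq : ⟪ξ, u⟫_ℝ^2 < 1 := by
        have h8 : |⟪ξ, u⟫_ℝ| < 1 := by
          rcases lt_or_eq_of_le habs with hlt | heq
          · exact hlt
          · rcases (abs_eq (by norm_num : (0:ℝ) ≤ 1)).mp heq with hc | hc
            · exact absurd hc hne1
            · exact absurd hc hnem1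
        nlinarith [sq_abs (⟪ξ, u⟫_ℝ), abs_nonneg (⟪ξ, u⟫_ℝ)]
      set d := ξ - ⟪ξ, u⟫_ℝ • u with hddef
      have hud : ⟪u, d⟫_ℝ = 0 := by
        rw [hddef, inner_sub_right, real_inner_smul_right, real_inner_self_eq_norm_sq, hu1,
          real_inner_comm]
        ring
      have hξd : 0 < ⟪ξ, d⟫_ℝ := by
        rw [hddef, inner_sub_right, real_inner_smul_right, real_inner_self_eq_norm_sq, hξ]
        nlinarith
      clear_value d
      have hGd : ⟪G, d⟫_ℝ = 0 := by
        rw [hGu, inner_neg_left, real_inner_smul_left, hud]; ring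
      have hd0 : d ≠ 0 := by
        intro hc
        rw [hc, inner_zero_right] at hξd
        exact lt_irrefl 0 hξd
      have hdn : 0 < ‖d‖ := norm_pos_iff.mpr hd0
      set C := (⟪ξ, p⟫_ℝ - ⟪ξ, z⟫_ℝ) / ⟪ξ, d⟫_ℝ with hCdef
      clear_value C
      have hC0 : 0 ≤ C := by
        rw [hCdef]
        exact div_nonneg (by linarith [hpmax z hzΩ]) hξd.le
      have hbpt : ∀ s : ℝ, s ∈ Set.Ioc (0:ℝ) 1 → ∃ r : ℝ, 0 ≤ r ∧ r ≤ C * s ∧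
          p + s • (z - p) + r • d ∈ frontier (Ω t) := by
        intro s hs
        set q := p + s • (z - p) with hqdef
        have hqΩ : q ∈ Ω t := hconv.add_smul_sub_mem hpΩ hzΩ ⟨hs.1.le, hs.2⟩
        set R := {r : ℝ | 0 ≤ r ∧ q + r • d ∈ Ω t} with hRdef
        have hR0 : (0:ℝ) ∈ R := ⟨le_refl 0, by simpa using hqΩ⟩
        obtain ⟨M, hM⟩ := hcomp.isBounded.exists_norm_le
        have hRbdd : BddAbove R := by
          refine ⟨(M + ‖q‖) / ‖d‖, fun r hr => ?_⟩
          have h1 : ‖q + r • d‖ ≤ M := hM _ hr.2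
          have h3 : ‖r • d‖ ≤ ‖q + r • d‖ + ‖q‖ := by
            have h4 := norm_sub_le (q + r • d) q
            rwa [add_sub_cancel_left] at h4
          rw [norm_smul, Real.norm_eq_abs, abs_of_nonneg hr.1] at h3
          rw [le_div_iff₀ hdn]
          nlinarith
        have hRcl : IsClosed R := by
          have hReq : R = Set.Ici (0:ℝ) ∩ (fun r : ℝ => q + r • d) ⁻¹' (Ω t) := rfl
          rw [hReq]
          exact isClosed_Ici.inter (hclosed.preimage (by fun_prop))
        set ρ := sSup R with hρdef
        have hρR : ρ ∈ R := hRcl.csSup_mem ⟨0, hR0⟩ hRbdd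
        refine ⟨ρ, hρR.1, ?_, ?_⟩
        · have hb := hpmax _ hρR.2
          rw [hqdef] at hb
          have hexp : ⟪ξ, p + s • (z - p) + ρ • d⟫_ℝ
              = ⟪ξ, p⟫_ℝ + s * (⟪ξ, z⟫_ℝ - ⟪ξ, p⟫_ℝ) + ρ * ⟪ξ, d⟫_ℝ := by
            simp only [inner_add_right, inner_sub_right, real_inner_smul_right]
          rw [hexp] at hb
          rw [hCdef, div_mul_eq_mul_div, le_div_iff₀ hξd]
          nlinarith
        · rw [hclosed.frontier_eq]
          refine ⟨hρR.2, fun hin => ?_⟩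
          obtain ⟨r₂, hr₂, hball⟩ := Metric.isOpen_iff.mp isOpen_interior _ hin
          have hstep : q + (ρ + r₂ / (2 * ‖d‖)) • d ∈ Ω t := by
            apply interior_subset
            apply hball
            rw [Metric.mem_ball, dist_eq_norm]
            have heq : q + (ρ + r₂ / (2 * ‖d‖)) • d - (q + ρ • d) = (r₂ / (2 * ‖d‖)) • d := by
              module
            rw [heq, norm_smul, Real.norm_eq_abs, abs_of_nonneg (by positivity)]
            have heq2 : r₂ / (2 * ‖d‖) * ‖d‖ = r₂ / 2 := by
              field_simp
            rw [heq2]; linarith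
          have hmem2 : ρ + r₂ / (2 * ‖d‖) ∈ R := ⟨add_nonneg hρR.1 (by positivity), hstep⟩
          have hle := le_csSup hRbdd hmem2
          have hpos2 : 0 < r₂ / (2 * ‖d‖) := by positivity
          linarith
      -- Taylor expansion contradiction
      set K := ‖z - p‖ + C * ‖d‖ with hKdef
      clear_value K
      have hzp : z ≠ p := by
        intro hc
        rw [hclosed.frontier_eq] at hpfr
        exact hpfr.2 (hc ▸ hz)
      have hK0 : 0 < K := by
        have h9 : 0 < ‖z - p‖ := norm_pos_iff.mpr (sub_ne_zero.mpr hzp)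
        have h10 := mul_nonneg hC0 hdn.le
        rw [hKdef]; linarith
      set c := ‖G‖ * ⟪u, p - z⟫_ℝ / (2 * K) with hcdef
      clear_value c
      have hc0 : 0 < c := by rw [hcdef]; positivity
      have hlo := ((hUtd p).hasFDerivAt.isLittleO).def hc0
      obtain ⟨r₃, hr₃, Hlo⟩ := Metric.eventually_nhds_iff.mp hlo
      set s := min 1 (r₃ / (2 * K)) with hsdef
      clear_value s
      have hs0 : 0 < s := by rw [hsdef]; positivity
      have hs1 : s ≤ 1 := by rw [hsdef]; exact min_le_left _ _
      obtain ⟨r, hr0, hrC, hrfr⟩ := hbpt s ⟨hs0, hs1⟩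
      set b := p + s • (z - p) + r • d with hbdef
      clear_value b
      have hbnorm : ‖b - p‖ ≤ K * s := by
        have h1 : b - p = s • (z - p) + r • d := by rw [hbdef]; module
        rw [h1]
        calc ‖s • (z - p) + r • d‖ ≤ ‖s • (z - p)‖ + ‖r • d‖ := norm_add_le _ _
          _ = s * ‖z - p‖ + r * ‖d‖ := by
              rw [norm_smul, norm_smul, Real.norm_eq_abs, Real.norm_eq_abs,
                abs_of_pos hs0, abs_of_nonneg hr0]
          _ ≤ s * ‖z - p‖ + (C * s) * ‖d‖ := by nlinarith
          _ = K * s := by rw [hKdef]; ring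
      have hbdist : dist b p < r₃ := by
        rw [dist_eq_norm]
        have h2 : K * s ≤ K * (r₃ / (2 * K)) :=
          mul_le_mul_of_nonneg_left (by rw [hsdef]; exact min_le_right _ _) hK0.le
        have h3 : K * (r₃ / (2 * K)) = r₃ / 2 := by
          field_simp [hK0.ne']
        linarith [hbnorm, h2, h3, hr₃]
      have hbound := Hlo hbdist
      have hUb : U t b = 0 := hbd t ht b hrfr
      have hfder : fderiv ℝ (U t) p (b - p) = s * (‖G‖ * ⟪u, p - z⟫_ℝ) := by
        rw [← hGinner]
        have h1 : b - p = s • (z - p) + r • d := by rw [hbdef]; module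
        rw [h1, inner_add_right, real_inner_smul_right, real_inner_smul_right, hGd]
        have h2 : ⟪G, z - p⟫_ℝ = ‖G‖ * ⟪u, p - z⟫_ℝ := by
          conv_lhs => rw [hGu]
          rw [inner_neg_left, real_inner_smul_left]
          have h3 : ⟪u, z - p⟫_ℝ = -⟪u, p - z⟫_ℝ := by
            rw [← inner_neg_right]; congr 1; module
          rw [h3]; ring
        rw [h2]; ring
      rw [hUb, hUp0, hfder] at hbound
      have hX0 : 0 < s * (‖G‖ * ⟪u, p - z⟫_ℝ) := mul_pos hs0 (mul_pos hGn hδ)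
      have hlhs : ‖(0:ℝ) - 0 - s * (‖G‖ * ⟪u, p - z⟫_ℝ)‖ = s * (‖G‖ * ⟪u, p - z⟫_ℝ) := by
        rw [Real.norm_eq_abs, show (0:ℝ) - 0 - s * (‖G‖ * ⟪u, p - z⟫_ℝ)
            = -(s * (‖G‖ * ⟪u, p - z⟫_ℝ)) from by ring, abs_neg, abs_of_nonneg hX0.le]
      rw [hlhs] at hbound
      have hrhs : c * ‖b - p‖ ≤ c * (K * s) := mul_le_mul_of_nonneg_left hbnorm hc0.le
      have hfin : c * (K * s) = s * (‖G‖ * ⟪u, p - z⟫_ℝ) / 2 := by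
        rw [hcdef]
        field_simp [hK0.ne']
      linarith [hbound, hrhs, hfin, hX0]
    rw [← hueq, neg_smul]
    exact hGu
  rw [hderiv_eq, ← hGinner Fd]
  conv_lhs => rw [hdir, real_inner_smul_left, hB]
  ring
end
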